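/- arXiv:2605.03347 — 2 statements merged into one kernel-verified Lean document; each statement's English description precedes it below -/
import Mathlib

section
/- Let P_n be the path graph on n ≥ 2 vertices. Then the ordered matching number of P_n equals ⌊n/2⌋. -/
/-- An ordered matching of size `s` in `G`, given by edges `{u i, v i}`:
the edges form a matching (all `2s` endpoints are distinct), `{u 1,…,u s}` is an
independent set, and `{u i, v j} ∈ E(G)` implies `i ≤ j`. -/
def IsOrderedMatching {V : Type*} (G : SimpleGraph V) {s : ℕ} (u v : Fin s → V) : Prop :=
  (∀ i, G.Adj (u i) (v i)) ∧
  (Function.Injective (fun p : Fin s × Bool => if p.2 then u p.1 else v p.1)) ∧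
  (∀ i j, ¬ G.Adj (u i) (u j)) ∧
  (∀ i j, G.Adj (u i) (v j) → i ≤ j)

/-- The ordered matching number `ν₀(G)`: the maximum size of an ordered matching in `G`. -/
noncomputable def orderedMatchingNumber {V : Type*} (G : SimpleGraph V) : ℕ :=
  sSup {s : ℕ | ∃ u v : Fin s → V, IsOrderedMatching G u v}

/-!
An ordered matching of size `s` has `2s` distinct endpoints, so `ν₀(P_n) ≤ ⌊n/2⌋`.
Conversely the edges `{2i+1, 2i}` for `i < ⌊n/2⌋` form an ordered matching: the odd vertices
`u i = 2i+1` are pairwise non-adjacent, and `u i` is adjacent only to `v i = 2i` and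
`v (i+1) = 2i+2`.
-/

namespace IsOrderedMatching

variable {V : Type*} {G : SimpleGraph V}

theorem of_isEmpty (u v : Fin 0 → V) : IsOrderedMatching G u v :=
  ⟨finZeroElim, fun p => p.1.elim0, finZeroElim, finZeroElim⟩

theorem two_mul_le_card [Fintype V] {s : ℕ} {u v : Fin s → V}
    (h : IsOrderedMatching G u v) : 2 * s ≤ Fintype.card V := by
  have hcard := Fintype.card_le_of_injective _ h.2.1
  rwa [Fintype.card_prod, Fintype.card_fin, Fintype.card_bool, mul_comm] at hcard

end IsOrderedMatching

section Finite

variable {V : Type*} [Fintype V] {G : SimpleGraph V}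

theorem IsOrderedMatching.le_card_div_two {s : ℕ} {u v : Fin s → V}
    (h : IsOrderedMatching G u v) : s ≤ Fintype.card V / 2 :=
  (Nat.le_div_iff_mul_le two_pos).2 (mul_comm 2 s ▸ h.two_mul_le_card)

theorem orderedMatchingNumber_le_card_div_two :
    orderedMatchingNumber G ≤ Fintype.card V / 2 :=
  csSup_le ⟨0, finZeroElim, finZeroElim, .of_isEmpty _ _⟩ fun _ ⟨_, _, h⟩ => h.le_card_div_two

theorem IsOrderedMatching.le_orderedMatchingNumber {s : ℕ} {u v : Fin s → V}
    (h : IsOrderedMatching G u v) : s ≤ orderedMatchingNumber G :=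
  le_csSup ⟨_, fun _ ⟨_, _, h'⟩ => h'.le_card_div_two⟩ ⟨u, v, h⟩

end Finite

theorem isOrderedMatching_pathGraph (n : ℕ) :
    IsOrderedMatching (SimpleGraph.pathGraph n)
      (fun i : Fin (n / 2) => ⟨2 * i + 1, by omega⟩) (fun i => ⟨2 * i, by omega⟩) := by
  refine ⟨fun i => ?_, ?_, fun i j => ?_, fun i j => ?_⟩
  · exact SimpleGraph.pathGraph_adj.2 (Or.inr rfl)
  · rintro ⟨i, _ | _⟩ ⟨j, _ | _⟩ h <;>
      simp only [Bool.false_eq_true, ite_true, ite_false, Fin.ext_iff, Prod.mk.injEq,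
        and_true] at h ⊢ <;> omega
  · simp only [SimpleGraph.pathGraph_adj]
    omega
  · simp only [SimpleGraph.pathGraph_adj, Fin.le_iff_val_le_val]
    omega

theorem orderedMatchingNumber_pathGraph_general (n : ℕ) :
    orderedMatchingNumber (SimpleGraph.pathGraph n) = n / 2 := by
  apply le_antisymm
  · simpa using orderedMatchingNumber_le_card_div_two (G := SimpleGraph.pathGraph n)
  · exact (isOrderedMatching_pathGraph n).le_orderedMatchingNumber

/-- The ordered matching number of the path graph `P_n` (`n ≥ 2`) is `⌊n/2⌋`. -/
theorem orderedMatchingNumber_pathGraph (n : ℕ) (hn : 2 ≤ n) :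
    orderedMatchingNumber (SimpleGraph.pathGraph n) = n / 2 :=
  orderedMatchingNumber_pathGraph_general n
end

section
/- Let K be a field, n ≥ 2, R = K[x_1,…,x_n], P_n the path graph, and t ≥ 1 an integer. For a monomial f = x_1^{a_1}···x_n^{a_n} ∉ J(P_n)^t, set S(f) = { i ∈ {1,…,n−1} : a_i + a_{i+1} ≤ t − 1 }. Then the radical of the colon ideal satisfies √(J(P_n)^t : f) = ⋂_{i ∈ S(f)} (x_i, x_{i+1}). -/
/-!
For an edge `{u, v}` the ideal `P = (x_u, x_v)` is prime and contains `J`, and comparing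
`(x_u, x_v)`-degrees of monomials shows `(P^t : x^a) ⊆ P` when `a_u + a_v < t`; this gives `⊆`.
Conversely, if `x^m` lies in every such `P`, then `c = t m + a` satisfies `t ≤ c_u + c_v` on every
edge, and on a bipartite graph any such `x^c` lies in `J^t`: using the 2-colouring one can split
off a vertex cover `b ≤ c` such that `c - b` still satisfies the condition for `t - 1`.
Hence `(x^m)^t ∈ (J^t : x^a)`.
-/

open MvPolynomial

/-- The cover ideal `J(G) = ⋂_{{u,v} ∈ E(G)} (x_u, x_v)` of a graph `G` on `{1,…,n}`,
inside `R = K[x_1,…,x_n]`. -/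
noncomputable def coverIdeal (K : Type*) [Field K] {n : ℕ} (G : SimpleGraph (Fin n)) :
    Ideal (MvPolynomial (Fin n) K) :=
  ⨅ (u : Fin n) (v : Fin n) (_ : G.Adj u v), Ideal.span {X u, X v}

namespace MvPolynomial

variable {σ R : Type*}

section CommSemiring

variable [CommSemiring R]

theorem mem_of_forall_monomial_mem {I : Ideal (MvPolynomial σ R)} {p : MvPolynomial σ R}
    (h : ∀ m ∈ p.support, monomial m (1 : R) ∈ I) : p ∈ I := by
  rw [p.as_sum]
  refine I.sum_mem fun m hm => ?_
  simpa [C_mul_monomial] using I.mul_mem_left (C (coeff m p)) (h m hm)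

theorem mem_span_X_pair_iff {u v : σ} {p : MvPolynomial σ R} :
    p ∈ Ideal.span {X u, X v} ↔ ∀ m ∈ p.support, m u ≠ 0 ∨ m v ≠ 0 := by
  rw [← Set.image_pair, mem_ideal_span_X_image]
  simp

theorem le_sum_of_mem_span_X_image_pow {s : Finset σ} {t : ℕ} {p : MvPolynomial σ R}
    (hp : p ∈ Ideal.span (X '' (s : Set σ)) ^ t) {m : σ →₀ ℕ} (hm : m ∈ p.support) :
    t ≤ ∑ i ∈ s, m i := by
  classical
  induction t generalizing p m with
  | zero => exact Nat.zero_le _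
  | succ t ih =>
    rw [pow_succ] at hp
    refine Submodule.mul_induction_on hp (C := fun p => ∀ m ∈ p.support, t + 1 ≤ ∑ i ∈ s, m i)
      ?_ ?_ m hm
    · intro x hx y hy m hm
      obtain ⟨mx, hmx, my, hmy, rfl⟩ := Finset.mem_add.mp (support_mul x y hm)
      obtain ⟨i, hi, hmyi⟩ := mem_ideal_span_X_image.mp hy my hmy
      have hx := ih hx hmx
      have hy : my i ≤ ∑ j ∈ s, my j := Finset.single_le_sum (fun _ _ => Nat.zero_le _) hi
      simp only [Finsupp.add_apply, Finset.sum_add_distrib]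
      omega
    · intro x y hx hy m hm
      rcases Finset.mem_union.mp (support_add hm) with h | h
      exacts [hx m h, hy m h]

theorem colon_span_X_image_pow_le {s : Finset σ} {t : ℕ} {a : σ →₀ ℕ}
    (ha : ∑ i ∈ s, a i < t) :
    (Ideal.span (X '' (s : Set σ)) ^ t : Ideal (MvPolynomial σ R)).colon
        (Ideal.span {monomial a (1 : R)}) ≤
      Ideal.span (X '' (s : Set σ)) := by
  intro g hg
  rw [Ideal.mem_colon_span_singleton] at hg
  rw [mem_ideal_span_X_image]
  intro m hm
  by_contra! hm0
  have hma : m + a ∈ (g * monomial a 1).support := by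
    rwa [mem_support_iff, coeff_mul_monomial, mul_one, ← mem_support_iff]
  have := le_sum_of_mem_span_X_image_pow hg hma
  simp only [Finsupp.add_apply, Finset.sum_add_distrib,
    Finset.sum_eq_zero fun i hi => hm0 i hi, zero_add] at this
  omega

end CommSemiring

section CommRing

variable [CommRing R]

theorem ker_aeval_indicator_compl (s : Set σ) :
    RingHom.ker (aeval (sᶜ.indicator X) : MvPolynomial σ R →ₐ[R] MvPolynomial σ R) =
      Ideal.span (X '' s) := by
  refine le_antisymm (fun p hp => ?_) ?_
  · -- `aeval (sᶜ.indicator X)` is the identity modulo the ideal.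
    have hmk : (Ideal.Quotient.mkₐ R (Ideal.span (X '' s))).comp (aeval (sᶜ.indicator X)) =
        Ideal.Quotient.mkₐ R _ := by
      refine algHom_ext fun i => ?_
      by_cases hi : i ∈ s
      · simpa [hi, eq_comm (a := (0 : _ ⧸ _)), Ideal.Quotient.eq_zero_iff_mem] using
          Ideal.subset_span (Set.mem_image_of_mem (X : σ → MvPolynomial σ R) hi)
      · simp [hi]
    rw [← Ideal.Quotient.eq_zero_iff_mem, ← Ideal.Quotient.mkₐ_eq_mk R, ← hmk,
      AlgHom.comp_apply, RingHom.mem_ker.mp hp, map_zero]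
  · rw [Ideal.span_le]
    rintro _ ⟨i, hi, rfl⟩
    simp [hi]

theorem isPrime_span_X_image [IsDomain R] (s : Set σ) :
    (Ideal.span (X '' s : Set (MvPolynomial σ R))).IsPrime := by
  rw [← ker_aeval_indicator_compl]
  exact RingHom.ker_isPrime _

theorem radical_colon_le_span_X_pair [IsDomain R] {I : Ideal (MvPolynomial σ R)} {u v : σ}
    (huv : u ≠ v) {t : ℕ} (hI : I ≤ Ideal.span {X u, X v} ^ t) {a : σ →₀ ℕ} (ha : a u + a v < t) :
    (I.colon (Ideal.span {monomial a (1 : R)})).radical ≤ Ideal.span {X u, X v} := by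
  classical
  have hP : (Ideal.span {X u, X v} : Ideal (MvPolynomial σ R)) =
      Ideal.span (X '' (({u, v} : Finset σ) : Set σ)) := by
    rw [Finset.coe_pair, Set.image_pair]
  rw [hP] at hI ⊢
  rw [← (isPrime_span_X_image _).radical]
  exact Ideal.radical_mono ((Submodule.colon_mono hI le_rfl).trans
    (colon_span_X_image_pow_le (by rwa [Finset.sum_pair huv])))

end CommRing

end MvPolynomial

section CoverIdeal

variable {K : Type*} [Field K] {n : ℕ} {G : SimpleGraph (Fin n)}

theorem coverIdeal_le_span_X_pair {u v : Fin n} (huv : G.Adj u v) :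
    coverIdeal K G ≤ Ideal.span {X u, X v} :=
  iInf₂_le_of_le u v (iInf_le _ huv)

theorem monomial_mem_coverIdeal_iff {c : Fin n →₀ ℕ} :
    monomial c (1 : K) ∈ coverIdeal K G ↔ ∀ u v, G.Adj u v → c u ≠ 0 ∨ c v ≠ 0 := by
  classical
  simp [coverIdeal, mem_span_X_pair_iff, support_monomial]

theorem monomial_mem_coverIdeal_pow (C : G.Coloring Bool) {t : ℕ} {c : Fin n →₀ ℕ}
    (hc : ∀ u v, G.Adj u v → t ≤ c u + c v) : monomial c (1 : K) ∈ coverIdeal K G ^ t := by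
  induction t generalizing c with
  | zero => simp
  | succ t ih =>
    -- A vertex cover `b ≤ c` with `t ≤ (c - b) u + (c - b) v` on every edge: the `false` end of
    -- an edge is taken unless its weight is `0`, and then the `true` end has weight `> t`.
    set b : Fin n →₀ ℕ := Finsupp.equivFunOnFinite.symm fun i =>
      if (bif C i then t else 0) < c i then 1 else 0 with hb_def
    have hb : b ≤ c := fun i => by
      simp only [hb_def, Finsupp.coe_equivFunOnFinite_symm]
      split_ifs <;> omega
    have hedge : ∀ u v, G.Adj u v → (b u ≠ 0 ∨ b v ≠ 0) ∧ t ≤ (c - b) u + (c - b) v := by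
      intro u v huv
      have hcuv := hc u v huv
      simp only [hb_def, Finsupp.coe_equivFunOnFinite_symm, Finsupp.tsub_apply]
      obtain ⟨hu, hv⟩ | ⟨hu, hv⟩ : C u = true ∧ C v = false ∨ C u = false ∧ C v = true := by
        have hC := C.valid huv
        revert hC
        cases C u <;> cases C v <;> decide
      all_goals simp only [hu, hv, cond_true, cond_false]; split_ifs <;> omega
    rw [← add_tsub_cancel_of_le hb, ← mul_one (1 : K), ← monomial_mul, pow_succ']
    exact Ideal.mul_mem_mul (monomial_mem_coverIdeal_iff.2 fun u v huv => (hedge u v huv).1)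
      (ih fun u v huv => (hedge u v huv).2)

theorem radical_colon_coverIdeal_pow (C : G.Coloring Bool) (t : ℕ) (a : Fin n →₀ ℕ) :
    ((coverIdeal K G ^ t).colon (Ideal.span {monomial a (1 : K)})).radical =
      ⨅ (u : Fin n) (v : Fin n) (_ : G.Adj u v) (_ : a u + a v < t), Ideal.span {X u, X v} := by
  apply le_antisymm
  · exact le_iInf₂ fun u v => le_iInf₂ fun huv ha => radical_colon_le_span_X_pair (G.ne_of_adj huv)
      (Ideal.pow_right_mono (coverIdeal_le_span_X_pair huv) t) ha
  · intro p hp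
    simp only [Ideal.mem_iInf, mem_span_X_pair_iff] at hp
    refine mem_of_forall_monomial_mem fun m hm => ⟨t, ?_⟩
    rw [Ideal.mem_colon_span_singleton, monomial_pow, one_pow, monomial_mul, one_mul]
    refine monomial_mem_coverIdeal_pow C fun u v huv => ?_
    simp only [Finsupp.add_apply, Finsupp.smul_apply, smul_eq_mul]
    by_cases ha : a u + a v < t
    · rcases hp u v huv ha m hm with h | h <;>
        have := Nat.le_mul_of_pos_right t (Nat.pos_of_ne_zero h) <;> omega
    · omega

end CoverIdeal

theorem radical_colon_coverIdeal_pow_pathGraph_general (K : Type*) [Field K] (n t : ℕ)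
    (ht : 1 ≤ t) (a : Fin n →₀ ℕ) :
    (((coverIdeal K (SimpleGraph.pathGraph n)) ^ t).colon
        (Ideal.span {monomial a (1 : K)})).radical
      = ⨅ (u : Fin n) (v : Fin n) (_ : (SimpleGraph.pathGraph n).Adj u v)
          (_ : a u + a v ≤ t - 1), Ideal.span {X u, X v} := by
  simp_rw [Nat.le_sub_one_iff_lt ht]
  exact radical_colon_coverIdeal_pow (SimpleGraph.pathGraph.bicoloring n) t a

/-- For a monomial `f = x_1^{a_1} ⋯ x_n^{a_n} ∉ J(P_n)^t`, the radical of the colon ideal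
`(J(P_n)^t : f)` is the intersection of the edge ideals `(x_i, x_{i+1})` over exactly those
edges `{i, i+1}` of the path with `a_i + a_{i+1} ≤ t - 1`. -/
theorem radical_colon_coverIdeal_pow_pathGraph (K : Type*) [Field K] (n t : ℕ)
    (hn : 2 ≤ n) (ht : 1 ≤ t) (a : Fin n →₀ ℕ)
    (hf : (monomial a (1 : K)) ∉ (coverIdeal K (SimpleGraph.pathGraph n)) ^ t) :
    (((coverIdeal K (SimpleGraph.pathGraph n)) ^ t).colon
        (Ideal.span {monomial a (1 : K)})).radical
      = ⨅ (u : Fin n) (v : Fin n) (_ : (SimpleGraph.pathGraph n).Adj u v)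
          (_ : a u + a v ≤ t - 1), Ideal.span {X u, X v} :=
  radical_colon_coverIdeal_pow_pathGraph_general K n t ht a
end
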